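/- arXiv:1806.02402 — 4 statements merged into one kernel-verified Lean document; each statement's English description precedes it below -/
import Mathlib

section
/- Let F and 𝒢 be real Hilbert spaces, S : F → 𝒢 a bounded linear operator and C = S*S. Let Ĉ : F → F be any positive self-adjoint bounded operator and λ > 0. Then the operator norm satisfies ‖S (Ĉ + λI)^{-1}‖ ≤ 1/√λ + ‖C − Ĉ‖^{1/2} / λ. -/
/-!
Write `x = (Ĉ + λ) y`. Pairing with `y` and using `⟪Ĉ y, y⟫ ≥ 0` gives `λ ‖y‖ ≤ ‖x‖` and
`⟪Ĉ y, y⟫ ≤ ‖x‖² / λ`. Since `‖S y‖² = ⟪C y, y⟫ = ⟪(C - Ĉ) y, y⟫ + ⟪Ĉ y, y⟫`, this yields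
`‖S y‖² ≤ ‖C - Ĉ‖ ‖x‖² / λ² + ‖x‖² / λ`, and `√(a + b) ≤ √a + √b` gives the bound.
-/

open ContinuousLinearMap
open scoped InnerProductSpace

namespace ContinuousLinearMap

variable {E F : Type*} [NormedAddCommGroup E] [InnerProductSpace ℝ E]
  [NormedAddCommGroup F] [InnerProductSpace ℝ F]

theorem inner_apply_self_add_smul_mul_norm_sq_le (T : E →L[ℝ] E) (lam : ℝ) (y : E) :
    ⟪T y, y⟫_ℝ + lam * ‖y‖ ^ 2 ≤ ‖(T + lam • 1) y‖ * ‖y‖ :=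
  calc ⟪T y, y⟫_ℝ + lam * ‖y‖ ^ 2 = ⟪(T + lam • 1) y, y⟫_ℝ := by
        rw [add_apply, smul_apply, one_apply_eq_self, inner_add_left, real_inner_smul_left,
          real_inner_self_eq_norm_sq]
    _ ≤ ‖(T + lam • 1) y‖ * ‖y‖ := real_inner_le_norm _ _

namespace IsPositive

variable {T : E →L[ℝ] E} {lam : ℝ}

theorem norm_le_norm_add_smul_apply_div (hT : T.IsPositive) (hlam : 0 < lam) (y : E) :
    ‖y‖ ≤ ‖(T + lam • 1) y‖ / lam := by
  have h := inner_apply_self_add_smul_mul_norm_sq_le T lam y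
  have hTy := hT.inner_nonneg_left y
  rw [le_div_iff₀ hlam]
  rcases (norm_nonneg y).eq_or_lt with hy | hy
  · rw [← hy, zero_mul]
    exact norm_nonneg _
  · nlinarith

theorem inner_apply_self_le_norm_add_smul_apply_sq_div (hT : T.IsPositive) (hlam : 0 < lam)
    (y : E) : ⟪T y, y⟫_ℝ ≤ ‖(T + lam • 1) y‖ ^ 2 / lam := by
  have h := inner_apply_self_add_smul_mul_norm_sq_le T lam y
  have hy := hT.norm_le_norm_add_smul_apply_div hlam y
  calc ⟪T y, y⟫_ℝ ≤ ‖(T + lam • 1) y‖ * ‖y‖ := by nlinarith [sq_nonneg ‖y‖]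
    _ ≤ ‖(T + lam • 1) y‖ * (‖(T + lam • 1) y‖ / lam) := by gcongr
    _ = ‖(T + lam • 1) y‖ ^ 2 / lam := by ring

end IsPositive

theorem norm_apply_sq_le_norm_adjoint_comp_self_sub_mul_add_inner [CompleteSpace E]
    [CompleteSpace F] (S : E →L[ℝ] F) (T : E →L[ℝ] E) (y : E) :
    ‖S y‖ ^ 2 ≤ ‖adjoint S ∘L S - T‖ * ‖y‖ ^ 2 + ⟪T y, y⟫_ℝ :=
  calc ‖S y‖ ^ 2 = ⟪(adjoint S ∘L S - T) y, y⟫_ℝ + ⟪T y, y⟫_ℝ := by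
        rw [apply_norm_sq_eq_inner_adjoint_left, sub_apply, inner_sub_left]
        simp
    _ ≤ ‖(adjoint S ∘L S - T) y‖ * ‖y‖ + ⟪T y, y⟫_ℝ := by gcongr; exact real_inner_le_norm _ _
    _ ≤ ‖adjoint S ∘L S - T‖ * ‖y‖ * ‖y‖ + ⟪T y, y⟫_ℝ := by gcongr; exact le_opNorm _ _
    _ = ‖adjoint S ∘L S - T‖ * ‖y‖ ^ 2 + ⟪T y, y⟫_ℝ := by ring

theorem IsPositive.norm_apply_le_mul_norm_add_smul_apply [CompleteSpace E] [CompleteSpace F]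
    (S : E →L[ℝ] F) {T : E →L[ℝ] E} (hT : T.IsPositive) {lam : ℝ} (hlam : 0 < lam) (y : E) :
    ‖S y‖ ≤ (1 / √lam + √‖adjoint S ∘L S - T‖ / lam) * ‖(T + lam • 1) y‖ := by
  set x := (T + lam • 1) y
  set c := ‖adjoint S ∘L S - T‖
  have hc : 0 ≤ c := norm_nonneg _
  have hsq : ‖S y‖ ^ 2 ≤ (‖x‖ / √lam) ^ 2 + (√c * ‖x‖ / lam) ^ 2 := by
    rw [div_pow, Real.sq_sqrt hlam.le, mul_div_assoc, mul_pow, Real.sq_sqrt hc]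
    have hy := hT.norm_le_norm_add_smul_apply_div hlam y
    have := norm_apply_sq_le_norm_adjoint_comp_self_sub_mul_add_inner S T y
    have := hT.inner_apply_self_le_norm_add_smul_apply_sq_div hlam y
    have : c * ‖y‖ ^ 2 ≤ c * (‖x‖ / lam) ^ 2 := by gcongr
    linarith
  have ha : 0 ≤ ‖x‖ / √lam := by positivity
  have hb : 0 ≤ √c * ‖x‖ / lam := by positivity
  calc ‖S y‖ ≤ ‖x‖ / √lam + √c * ‖x‖ / lam :=
        le_of_sq_le_sq (by nlinarith [mul_nonneg ha hb]) (add_nonneg ha hb)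
    _ = (1 / √lam + √c / lam) * ‖x‖ := by ring

end ContinuousLinearMap

theorem stmt_1_general {F 𝒢 : Type*}
    [NormedAddCommGroup F] [InnerProductSpace ℝ F] [CompleteSpace F]
    [NormedAddCommGroup 𝒢] [InnerProductSpace ℝ 𝒢] [CompleteSpace 𝒢]
    (S : F →L[ℝ] 𝒢) (Chat : F →L[ℝ] F) (hChat : Chat.IsPositive)
    (lam : ℝ) (hlam : 0 < lam)
    (D : F →L[ℝ] F)
    (hD1 : (Chat + lam • 1) ∘L D = 1) :
    ‖S ∘L D‖ ≤ 1 / Real.sqrt lam + Real.sqrt ‖adjoint S ∘L S - Chat‖ / lam := by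
  refine opNorm_le_bound _ (by positivity) fun x => ?_
  have hx : (Chat + lam • 1) (D x) = x := by simpa using congrArg (· x) hD1
  simpa [hx] using hChat.norm_apply_le_mul_norm_add_smul_apply S hlam (D x)

/-- **Bound on `‖S (Ĉ + λI)⁻¹‖`.**
`F`, `𝒢` real Hilbert spaces, `S : F → 𝒢` bounded, `C = S*S`, `Ĉ` a positive
self-adjoint bounded operator on `F`, `λ > 0`, and `D` the (two-sided) inverse
of `Ĉ + λI`.  Then `‖S (Ĉ + λI)⁻¹‖ ≤ 1/√λ + ‖C - Ĉ‖^{1/2} / λ`. -/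
theorem stmt_1 {F 𝒢 : Type*}
    [NormedAddCommGroup F] [InnerProductSpace ℝ F] [CompleteSpace F]
    [NormedAddCommGroup 𝒢] [InnerProductSpace ℝ 𝒢] [CompleteSpace 𝒢]
    (S : F →L[ℝ] 𝒢) (Chat : F →L[ℝ] F) (hChat : Chat.IsPositive)
    (lam : ℝ) (hlam : 0 < lam)
    (D : F →L[ℝ] F)
    (hD1 : (Chat + lam • 1) ∘L D = 1) (hD2 : D ∘L (Chat + lam • 1) = 1) :
    ‖S ∘L D‖ ≤ 1 / Real.sqrt lam + Real.sqrt ‖adjoint S ∘L S - Chat‖ / lam :=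
  stmt_1_general S Chat hChat lam hlam D hD1
end

section
/- Let F and H be separable real Hilbert spaces, let f_1,…,f_m ∈ F and h_1,…,h_m ∈ H, and let λ > 0. Define the positive operator Ĉ = (1/m) Σ_{j=1}^m f_j ⊗ f_j on F and the operator B̂ : H → F by B̂ h = (1/m) Σ_{j=1}^m ⟨h_j, h⟩ f_j. Then the strictly convex functional W ↦ (1/m) Σ_{j=1}^m ‖h_j − W f_j‖_H^2 + λ ‖W‖_{HS}^2 over Hilbert–Schmidt operators W : F → H has the unique minimizer Ŵ = B̂* (Ĉ + λI)^{-1}. -/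
/-!
Write `J(W) = c ∑ⱼ ‖hⱼ - W fⱼ‖² + λ ‖W‖²_HS` with `c = 1/m`. Composing `Ŵ = B̂* D` with
`Ĉ + λ` on the right gives `Ŵ (Ĉ + λ) = B̂*`, which is the normal equation
`λ Ŵ = c ∑ⱼ (hⱼ - Ŵ fⱼ) ⊗ fⱼ`. In particular `Ŵ` has finite rank, hence is Hilbert–Schmidt, and
pairing the normal equation with `Δ` in the Hilbert–Schmidt inner product gives
`λ ⟨Ŵ, Δ⟩_HS = c ∑ⱼ ⟨hⱼ - Ŵ fⱼ, Δ fⱼ⟩`. This is exactly the cancellation of the cross terms in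
`J(Ŵ + Δ) = J(Ŵ) + c ∑ⱼ ‖Δ fⱼ‖² + λ ‖Δ‖²_HS`,
and the last term vanishes only for `Δ = 0`.
-/

noncomputable section

open ContinuousLinearMap RealInnerProductSpace

/-- The rank-one operator `u ⊗ v : w ↦ ⟨v, w⟩ • u`. -/
def rankOne {E H : Type*} [NormedAddCommGroup E] [InnerProductSpace ℝ E]
    [NormedAddCommGroup H] [InnerProductSpace ℝ H] (u : H) (v : E) : E →L[ℝ] H :=
  (innerSL ℝ v).smulRight u

/-- The squared Hilbert–Schmidt norm of `T : E → H` computed along a Hilbert basis of `E`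
(the value is independent of the chosen basis). -/
def hsNormSq {ι E H : Type*} [NormedAddCommGroup E] [InnerProductSpace ℝ E]
    [NormedAddCommGroup H] [InnerProductSpace ℝ H]
    (b : HilbertBasis ι ℝ E) (T : E →L[ℝ] H) : ℝ :=
  ∑' i, ‖T (b i)‖ ^ 2

section HilbertSchmidtRidge

variable {ι J E K : Type*} [NormedAddCommGroup E] [InnerProductSpace ℝ E]
  [NormedAddCommGroup K] [InnerProductSpace ℝ K]

lemma rankOne_eq_innerProductSpace_rankOne (u : K) (v : E) :
    rankOne u v = InnerProductSpace.rankOne ℝ u v := rfl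

@[simp]
lemma rankOne_apply (u : K) (v x : E) : rankOne u v x = ⟪v, x⟫ • u := rfl

section HilbertSchmidt

variable (b : HilbertBasis ι ℝ E)

def hsSubmodule : Submodule ℝ (E →L[ℝ] K) where
  carrier := {T | Summable fun i => ‖T (b i)‖ ^ 2}
  zero_mem' := by simp
  add_mem' {S T} hS hT := by
    refine .of_nonneg_of_le (fun i => by positivity) (fun i => ?_) ((hS.add hT).mul_left 2)
    exact (pow_le_pow_left₀ (norm_nonneg _) (norm_add_le _ _) 2).trans add_sq_le
  smul_mem' r T hT := by
    refine (hT.mul_left (r ^ 2)).congr fun i => ?_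
    simp only [smul_apply, norm_smul, mul_pow, Real.norm_eq_abs, sq_abs]

variable {b}

lemma rankOne_mem_hsSubmodule (u : K) (v : E) : rankOne u v ∈ hsSubmodule b := by
  refine ((b.summable_inner_mul_inner v v).mul_right (‖u‖ ^ 2)).congr fun i => ?_
  rw [rankOne_apply, norm_smul, mul_pow, Real.norm_eq_abs, sq_abs, sq, real_inner_comm v]
  ring

lemma summable_inner_apply {S T : E →L[ℝ] K} (hS : S ∈ hsSubmodule b) (hT : T ∈ hsSubmodule b) :
    Summable fun i => ⟪S (b i), T (b i)⟫ := by
  have hST : Summable fun i => ‖(S + T) (b i)‖ ^ 2 - ‖S (b i)‖ ^ 2 - ‖T (b i)‖ ^ 2 :=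
    ((add_mem hS hT).sub hS).sub hT
  refine (hST.div_const 2).congr fun i => ?_
  rw [add_apply, norm_add_sq_real]
  ring

lemma hsNormSq_nonneg (T : E →L[ℝ] K) : 0 ≤ hsNormSq b T :=
  tsum_nonneg fun _ => sq_nonneg _

lemma hsNormSq_add {S T : E →L[ℝ] K} (hS : S ∈ hsSubmodule b) (hT : T ∈ hsSubmodule b) :
    hsNormSq b (S + T) = hsNormSq b S + 2 * ∑' i, ⟪S (b i), T (b i)⟫ + hsNormSq b T := by
  have hpoint : ∀ i, ‖(S + T) (b i)‖ ^ 2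
      = ‖S (b i)‖ ^ 2 + 2 * ⟪S (b i), T (b i)⟫ + ‖T (b i)‖ ^ 2 := fun i => by
    rw [add_apply, norm_add_sq_real]
  simp only [hsNormSq, hpoint]
  rw [Summable.tsum_add (hS.add ((summable_inner_apply hS hT).mul_left 2)) hT,
    Summable.tsum_add hS ((summable_inner_apply hS hT).mul_left 2), tsum_mul_left]

lemma eq_zero_of_hsNormSq_eq_zero {T : E →L[ℝ] K} (hT : T ∈ hsSubmodule b)
    (h0 : hsNormSq b T = 0) : T = 0 := by
  refine ext_on (Submodule.dense_iff_topologicalClosure_eq_top.mpr b.dense_span) ?_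
  rintro _ ⟨i, rfl⟩
  have hle : ‖T (b i)‖ ^ 2 ≤ 0 := h0 ▸ hT.le_tsum i fun _ _ => sq_nonneg _
  simpa using hle

lemma hasSum_inner_rankOne_apply (u : K) (v : E) (T : E →L[ℝ] K) :
    HasSum (fun i => ⟪rankOne u v (b i), T (b i)⟫) ⟪u, T v⟫ := by
  have := (b.hasSum_repr v).mapL (innerSL ℝ u ∘L T)
  simpa [real_inner_smul_left, HilbertBasis.repr_apply_apply, real_inner_comm v] using this

lemma tsum_inner_sum_rankOne_apply [Fintype J] (u : J → K) (v : J → E) (T : E →L[ℝ] K) :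
    ∑' i, ⟪(∑ j, rankOne (u j) (v j)) (b i), T (b i)⟫ = ∑ j, ⟪u j, T (v j)⟫ := by
  simp only [sum_apply, sum_inner]
  exact (hasSum_sum fun j _ => hasSum_inner_rankOne_apply (u j) (v j) T).tsum_eq

end HilbertSchmidt

section Ridge

variable [Fintype J]

def ridgeObjective (b : HilbertBasis ι ℝ E) (c lam : ℝ) (f : J → E) (h : J → K)
    (W : E →L[ℝ] K) : ℝ :=
  c * ∑ j, ‖h j - W (f j)‖ ^ 2 + lam * hsNormSq b W

variable {b : HilbertBasis ι ℝ E} {c lam : ℝ} {f : J → E} {h : J → K}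

lemma smul_eq_sum_rankOne_sub_of_comp_eq_adjoint [CompleteSpace E] [CompleteSpace K]
    {S : E →L[ℝ] K}
    (hS : S ∘L (c • ∑ j, rankOne (f j) (f j) + lam • 1) = adjoint (c • ∑ j, rankOne (f j) (h j))) :
    lam • S = c • ∑ j, rankOne (h j - S (f j)) (f j) := by
  simp only [rankOne_eq_innerProductSpace_rankOne, comp_add, comp_smul, one_def, comp_id,
    comp_finsetSum, InnerProductSpace.comp_rankOne, map_smulₛₗ, map_sum,
    InnerProductSpace.adjoint_rankOne, RCLike.conj_to_real] at hS ⊢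
  rw [← eq_sub_iff_add_eq'] at hS
  simp only [map_sub, sub_apply, Finset.sum_sub_distrib, smul_sub, hS]

lemma ridgeObjective_add {S Δ : E →L[ℝ] K} (hS : S ∈ hsSubmodule b) (hΔ : Δ ∈ hsSubmodule b)
    (hnormal : lam • S = c • ∑ j, rankOne (h j - S (f j)) (f j)) :
    ridgeObjective b c lam f h (S + Δ)
      = ridgeObjective b c lam f h S + (c * ∑ j, ‖Δ (f j)‖ ^ 2 + lam * hsNormSq b Δ) := by
  have hcross : lam * ∑' i, ⟪S (b i), Δ (b i)⟫ = c * ∑ j, ⟪h j - S (f j), Δ (f j)⟫ := by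
    calc lam * ∑' i, ⟪S (b i), Δ (b i)⟫ = ∑' i, ⟪(lam • S) (b i), Δ (b i)⟫ := by
          simp only [smul_apply, real_inner_smul_left, tsum_mul_left]
      _ = c * ∑ j, ⟪h j - S (f j), Δ (f j)⟫ := by
          simp only [hnormal, smul_apply, real_inner_smul_left, tsum_mul_left,
            tsum_inner_sum_rankOne_apply]
  have hdata : ∀ j, ‖h j - (S + Δ) (f j)‖ ^ 2
      = ‖h j - S (f j)‖ ^ 2 - 2 * ⟪h j - S (f j), Δ (f j)⟫ + ‖Δ (f j)‖ ^ 2 := fun j => by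
    rw [add_apply, ← sub_sub, norm_sub_sq_real]
  simp only [ridgeObjective, hdata, Finset.sum_add_distrib, Finset.sum_sub_distrib,
    ← Finset.mul_sum, hsNormSq_add hS hΔ]
  linear_combination 2 * hcross

lemma ridgeObjective_le {S W : E →L[ℝ] K} (hc : 0 ≤ c) (hlam : 0 ≤ lam)
    (hS : S ∈ hsSubmodule b) (hW : W ∈ hsSubmodule b)
    (hnormal : lam • S = c • ∑ j, rankOne (h j - S (f j)) (f j)) :
    ridgeObjective b c lam f h S ≤ ridgeObjective b c lam f h W := by
  rw [← add_sub_cancel S W, ridgeObjective_add hS (sub_mem hW hS) hnormal, le_add_iff_nonneg_right]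
  have := hsNormSq_nonneg (b := b) (W - S)
  positivity

lemma eq_of_ridgeObjective_eq {S W : E →L[ℝ] K} (hc : 0 ≤ c) (hlam : 0 < lam)
    (hS : S ∈ hsSubmodule b) (hW : W ∈ hsSubmodule b)
    (hnormal : lam • S = c • ∑ j, rankOne (h j - S (f j)) (f j))
    (heq : ridgeObjective b c lam f h W = ridgeObjective b c lam f h S) : W = S := by
  rw [← add_sub_cancel S W, ridgeObjective_add hS (sub_mem hW hS) hnormal,
    add_eq_left] at heq
  have hdata : 0 ≤ c * ∑ j, ‖(W - S) (f j)‖ ^ 2 := by positivity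
  have hreg : 0 ≤ lam * hsNormSq b (W - S) := mul_nonneg hlam.le (hsNormSq_nonneg _)
  have hzero : hsNormSq b (W - S) = 0 :=
    (mul_eq_zero.mp (by linarith)).resolve_left hlam.ne'
  exact sub_eq_zero.mp (eq_zero_of_hsNormSq_eq_zero (sub_mem hW hS) hzero)

end Ridge

end HilbertSchmidtRidge

theorem stmt_2_general {F H : Type*}
    [NormedAddCommGroup F] [InnerProductSpace ℝ F] [CompleteSpace F]
    [NormedAddCommGroup H] [InnerProductSpace ℝ H] [CompleteSpace H]
    {ι : Type*} (b : HilbertBasis ι ℝ F)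
    (m : ℕ) (f : Fin m → F) (h : Fin m → H)
    (lam : ℝ) (hlam : 0 < lam)
    (Chat : F →L[ℝ] F) (hChat : Chat = (m : ℝ)⁻¹ • ∑ j, rankOne (f j) (f j))
    (Bhat : H →L[ℝ] F) (hBhat : Bhat = (m : ℝ)⁻¹ • ∑ j, rankOne (f j) (h j))
    (D : F →L[ℝ] F)
    (hD2 : D ∘L (Chat + lam • 1) = 1)
    (What : F →L[ℝ] H) (hWhat : What = adjoint Bhat ∘L D) :
    Summable (fun i => ‖What (b i)‖ ^ 2)
    ∧ ∀ W : F →L[ℝ] H, Summable (fun i => ‖W (b i)‖ ^ 2) →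
        ((m : ℝ)⁻¹ * ∑ j, ‖h j - What (f j)‖ ^ 2 + lam * hsNormSq b What
            ≤ (m : ℝ)⁻¹ * ∑ j, ‖h j - W (f j)‖ ^ 2 + lam * hsNormSq b W)
        ∧ ((m : ℝ)⁻¹ * ∑ j, ‖h j - W (f j)‖ ^ 2 + lam * hsNormSq b W
              = (m : ℝ)⁻¹ * ∑ j, ‖h j - What (f j)‖ ^ 2 + lam * hsNormSq b What
            → W = What) := by
  have hnormal : lam • What = (m : ℝ)⁻¹ • ∑ j, rankOne (h j - What (f j)) (f j) := by
    refine smul_eq_sum_rankOne_sub_of_comp_eq_adjoint ?_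
    rw [← hChat, ← hBhat, hWhat, comp_assoc, hD2, one_def, comp_id]
  have hWhat_mem : What ∈ hsSubmodule b := by
    rw [← inv_smul_smul₀ hlam.ne' What, hnormal]
    refine Submodule.smul_mem _ _ (Submodule.smul_mem _ _ (Submodule.sum_mem _ fun j _ => ?_))
    exact rankOne_mem_hsSubmodule _ _
  have hm : (0 : ℝ) ≤ (m : ℝ)⁻¹ := by positivity
  exact ⟨hWhat_mem, fun W hW => ⟨ridgeObjective_le hm hlam.le hWhat_mem hW hnormal,
    eq_of_ridgeObjective_eq hm hlam hWhat_mem hW hnormal⟩⟩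

/-- **The ridge regression problem over Hilbert–Schmidt operators has the unique
minimizer `Ŵ = B̂* (Ĉ + λI)⁻¹`.**  Here `F`, `H` are separable real Hilbert spaces
(with `b` a Hilbert basis of `F`), `Ĉ = (1/m) ∑_j f_j ⊗ f_j`,
`B̂ h = (1/m) ∑_j ⟨h_j, h⟩ f_j`, `λ > 0`, and `D` is the inverse of `Ĉ + λI`.
The functional is `W ↦ (1/m) ∑_j ‖h_j - W f_j‖² + λ‖W‖²_{HS}` over Hilbert–Schmidt
operators `W : F → H`. -/
theorem stmt_2 {F H : Type*}
    [NormedAddCommGroup F] [InnerProductSpace ℝ F] [CompleteSpace F]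
    [NormedAddCommGroup H] [InnerProductSpace ℝ H] [CompleteSpace H]
    {ι : Type*} [Countable ι] (b : HilbertBasis ι ℝ F)
    (m : ℕ) (hm : 0 < m) (f : Fin m → F) (h : Fin m → H)
    (lam : ℝ) (hlam : 0 < lam)
    (Chat : F →L[ℝ] F) (hChat : Chat = (m : ℝ)⁻¹ • ∑ j, rankOne (f j) (f j))
    (Bhat : H →L[ℝ] F) (hBhat : Bhat = (m : ℝ)⁻¹ • ∑ j, rankOne (f j) (h j))
    (D : F →L[ℝ] F)
    (hD1 : (Chat + lam • 1) ∘L D = 1) (hD2 : D ∘L (Chat + lam • 1) = 1)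
    (What : F →L[ℝ] H) (hWhat : What = adjoint Bhat ∘L D) :
    Summable (fun i => ‖What (b i)‖ ^ 2)
    ∧ ∀ W : F →L[ℝ] H, Summable (fun i => ‖W (b i)‖ ^ 2) →
        ((m : ℝ)⁻¹ * ∑ j, ‖h j - What (f j)‖ ^ 2 + lam * hsNormSq b What
            ≤ (m : ℝ)⁻¹ * ∑ j, ‖h j - W (f j)‖ ^ 2 + lam * hsNormSq b W)
        ∧ ((m : ℝ)⁻¹ * ∑ j, ‖h j - W (f j)‖ ^ 2 + lam * hsNormSq b W
              = (m : ℝ)⁻¹ * ∑ j, ‖h j - What (f j)‖ ^ 2 + lam * hsNormSq b What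
            → W = What) :=
  stmt_2_general b m f h lam hlam Chat hChat Bhat hBhat D hD2 What hWhat
end
end

section
/- Let F, 𝒢, H be real Hilbert spaces with H separable, S : F → 𝒢 bounded linear, C = S*S, L = SS*, and let λ > 0. Let G : H → 𝒢 be a Hilbert–Schmidt operator and set B = S*G : H → F. Let Ĉ : F → F be any positive self-adjoint bounded operator and B̂ : H → F any Hilbert–Schmidt operator. Writing β₁ = ‖C − Ĉ‖ (operator norm), β₂ = ‖B̂ − B‖_{HS}, and A_r(λ) = ‖(L + λI)^{-r} G‖_{HS} for r > 0, the following inequality holds: ‖S (Ĉ + λI)^{-1} B̂ − G‖_{HS} ≤ (1/√λ + β₁^{1/2}/λ) (β₁ A_{1/2}(λ) + β₂) + λ A_1(λ). -/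
noncomputable section

open ContinuousLinearMap RealInnerProductSpace

/-- The Hilbert–Schmidt norm of `T : E → H` along a Hilbert basis of `E`. -/
def hsNorm {ι E H : Type*} [NormedAddCommGroup E] [InnerProductSpace ℝ E]
    [NormedAddCommGroup H] [InnerProductSpace ℝ H]
    (b : HilbertBasis ι ℝ E) (T : E →L[ℝ] H) : ℝ :=
  Real.sqrt (hsNormSq b T)

/-!
The resolvent identities `(Ĉ + λ)⁻¹ Ĉ = 1 - λ (Ĉ + λ)⁻¹` and `S S* (L + λ)⁻¹ = 1 - λ (L + λ)⁻¹` give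
`S (Ĉ + λ)⁻¹ B̂ - G = S (Ĉ + λ)⁻¹ (B̂ - S* G) + S (Ĉ + λ)⁻¹ (C - Ĉ) S* (L + λ)⁻¹ G - λ (L + λ)⁻¹ G`.
Splitting `(L + λ)⁻¹ = (L + λ)^{-1/2} (L + λ)^{-1/2}`, the triangle inequality and
`‖A T‖_HS ≤ ‖A‖ ‖T‖_HS` reduce the claim to two operator-norm bounds.
First, `‖S (Ĉ + λ)⁻¹‖ ≤ λ^{-1/2} + β₁^{1/2} / λ`: we have `‖S x‖² ≤ β₁ ‖x‖² + ⟪Ĉ x, x⟫`, and for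
`x = (Ĉ + λ)⁻¹ y` positivity of `Ĉ` gives `λ ‖x‖ ≤ ‖y‖` and `⟪Ĉ x, x⟫ ≤ ‖y‖² / λ`.
Second, `‖S* (L + λ)^{-1/2}‖ ≤ 1`: `(L + λ)^{-1/2}` commutes with `L`, so for
`w = (L + λ)^{-1/2} z` we get `‖S* w‖² + λ ‖w‖² = ⟪(L + λ) w, w⟫ = ‖z‖²`.
-/

theorem Memℓp.map_continuousLinearMap {ι 𝕜 E F : Type*} [NontriviallyNormedField 𝕜]
    [NormedAddCommGroup E] [NormedSpace 𝕜 E] [NormedAddCommGroup F] [NormedSpace 𝕜 F]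
    {p : ENNReal} {f : ι → E} (hf : Memℓp f p) (A : E →L[𝕜] F) :
    Memℓp (fun i => A (f i)) p :=
  (hf.norm.const_mul ‖A‖).mono fun i => A.le_opNorm (f i)

theorem memℓp_two_iff_summable_sq {ι E : Type*} [NormedAddCommGroup E] {f : ι → E} :
    Memℓp f 2 ↔ Summable fun i => ‖f i‖ ^ 2 := by
  rw [memℓp_gen_iff (by norm_num)]
  norm_num

section HilbertSchmidt

variable {ι E H K : Type*} [NormedAddCommGroup E] [InnerProductSpace ℝ E]
  [NormedAddCommGroup H] [InnerProductSpace ℝ H] [NormedAddCommGroup K] [InnerProductSpace ℝ K]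
  (b : HilbertBasis ι ℝ E)

theorem hsNorm_nonneg (T : E →L[ℝ] H) : 0 ≤ hsNorm b T := Real.sqrt_nonneg _

theorem hsNorm_eq_norm_lp {T : E →L[ℝ] H} (hT : Memℓp (fun i => T (b i)) 2) :
    hsNorm b T = ‖(⟨_, hT⟩ : lp (fun _ : ι => H) 2)‖ := by
  rw [hsNorm, hsNormSq, lp.norm_eq_tsum_rpow (by norm_num), Real.sqrt_eq_rpow]
  norm_num

theorem hsNorm_add_sub_le {T₁ T₂ T₃ : E →L[ℝ] H} (h₁ : Memℓp (fun i => T₁ (b i)) 2)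
    (h₂ : Memℓp (fun i => T₂ (b i)) 2) (h₃ : Memℓp (fun i => T₃ (b i)) 2) :
    hsNorm b (T₁ + T₂ - T₃) ≤ hsNorm b T₁ + hsNorm b T₂ + hsNorm b T₃ := by
  rw [hsNorm_eq_norm_lp b h₁, hsNorm_eq_norm_lp b h₂, hsNorm_eq_norm_lp b h₃,
    hsNorm_eq_norm_lp b (T := T₁ + T₂ - T₃) ((h₁.add h₂).sub h₃)]
  let x₁ : lp (fun _ : ι => H) 2 := ⟨_, h₁⟩
  let x₂ : lp (fun _ : ι => H) 2 := ⟨_, h₂⟩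
  exact (norm_sub_le (x₁ + x₂) ⟨_, h₃⟩).trans (add_le_add_left (norm_add_le x₁ x₂) _)

theorem hsNorm_comp_le (A : H →L[ℝ] K) {T : E →L[ℝ] H} (hT : Memℓp (fun i => T (b i)) 2) :
    hsNorm b (A ∘L T) ≤ ‖A‖ * hsNorm b T := by
  rw [hsNorm_eq_norm_lp b hT, hsNorm_eq_norm_lp b (T := A ∘L T) (hT.map_continuousLinearMap A),
    ← Real.norm_of_nonneg (norm_nonneg A), ← lp.norm_const_smul (by norm_num)]
  refine lp.norm_mono (by norm_num) fun i => ?_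
  simpa [norm_smul] using A.le_opNorm (T (b i))

theorem hsNorm_smul (c : ℝ) (T : E →L[ℝ] H) : hsNorm b (c • T) = |c| * hsNorm b T := by
  simp only [hsNorm, hsNormSq, smul_apply, norm_smul, mul_pow, Real.norm_eq_abs, sq_abs,
    tsum_mul_left, Real.sqrt_mul (sq_nonneg c), Real.sqrt_sq_eq_abs]

end HilbertSchmidt

theorem mul_mul_eq_one_of_mul_self_eq_inv {M : Type*} [Monoid M] {m l r : M}
    (hml : m * l = 1) (hlm : l * m = 1) (hr : r * r = l) : r * m * r = 1 := by
  have hrl : r * l = l * r := by rw [← hr, mul_assoc]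
  have hmr : m * r = r * m :=
    calc m * r = m * (r * l) * m := by rw [mul_assoc, mul_assoc, hlm, mul_one]
      _ = m * l * (r * m) := by rw [hrl, mul_assoc, mul_assoc, mul_assoc]
      _ = r * m := by rw [hml, one_mul]
  rw [← hmr, mul_assoc, hr, hml]

theorem ContinuousLinearMap.IsPositive.mul_norm_le_and_inner_le_sq_div {F : Type*}
    [NormedAddCommGroup F] [InnerProductSpace ℝ F] {C : F →L[ℝ] F} (hC : C.IsPositive) {lam : ℝ}
    (hlam : 0 < lam) (x : F) :
    lam * ‖x‖ ≤ ‖C x + lam • x‖ ∧ ⟪C x, x⟫ ≤ ‖C x + lam • x‖ ^ 2 / lam := by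
  set y := C x + lam • x
  have hCx : 0 ≤ ⟪C x, x⟫ := hC.inner_nonneg_left x
  have hy : ⟪C x, x⟫ + lam * ‖x‖ ^ 2 ≤ ‖y‖ * ‖x‖ := by
    rw [← real_inner_self_eq_norm_sq, ← real_inner_smul_left, ← inner_add_left]
    exact real_inner_le_norm y x
  have hx : lam * ‖x‖ ≤ ‖y‖ := by
    rcases (norm_nonneg x).eq_or_lt with h | h
    · rw [← h, mul_zero]; exact norm_nonneg y
    · nlinarith
  refine ⟨hx, (le_div_iff₀ hlam).2 ?_⟩
  calc ⟪C x, x⟫ * lam ≤ ‖y‖ * ‖x‖ * lam := by gcongr; nlinarith [sq_nonneg ‖x‖]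
    _ = ‖y‖ * (lam * ‖x‖) := by ring
    _ ≤ ‖y‖ ^ 2 := by rw [sq]; gcongr

section Resolvent

variable {F 𝒢 : Type*} [NormedAddCommGroup F] [InnerProductSpace ℝ F] [CompleteSpace F]
  [NormedAddCommGroup 𝒢] [InnerProductSpace ℝ 𝒢] [CompleteSpace 𝒢]

theorem sq_norm_apply_le (S : F →L[ℝ] 𝒢) (C : F →L[ℝ] F) (x : F) :
    ‖S x‖ ^ 2 ≤ ‖adjoint S ∘L S - C‖ * ‖x‖ ^ 2 + ⟪C x, x⟫ := by
  have hsplit : ‖S x‖ ^ 2 = ⟪(adjoint S ∘L S - C) x, x⟫ + ⟪C x, x⟫ := by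
    rw [sub_apply, inner_sub_left, comp_apply, adjoint_inner_left, real_inner_self_eq_norm_sq]
    ring
  have hinner := real_inner_le_norm ((adjoint S ∘L S - C) x) x
  have hop := (adjoint S ∘L S - C).le_opNorm x
  nlinarith [norm_nonneg x]

theorem one_div_add_div_sq_le {β lam : ℝ} (hβ : 0 ≤ β) (hlam : 0 < lam) :
    1 / lam + β / lam ^ 2 ≤ (1 / √lam + √β / lam) ^ 2 := by
  have hcross : 0 ≤ 2 * (1 / √lam) * (√β / lam) := by positivity
  rw [add_sq, div_pow, div_pow, Real.sq_sqrt hlam.le, Real.sq_sqrt hβ, one_pow]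
  linarith

theorem norm_comp_resolvent_le (S : F →L[ℝ] 𝒢) {C D : F →L[ℝ] F} (hC : C.IsPositive)
    {lam : ℝ} (hlam : 0 < lam) (hD : (C + lam • 1) ∘L D = 1) :
    ‖S ∘L D‖ ≤ 1 / √lam + √‖adjoint S ∘L S - C‖ / lam := by
  set β := ‖adjoint S ∘L S - C‖
  refine opNorm_le_bound _ (by positivity) fun y => ?_
  have hy : C (D y) + lam • D y = y := by simpa using congr($hD y)
  obtain ⟨hDy, hCDy⟩ := hC.mul_norm_le_and_inner_le_sq_div hlam (D y)
  rw [hy] at hDy hCDy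
  have hDy2 : ‖D y‖ ^ 2 ≤ ‖y‖ ^ 2 / lam ^ 2 := by
    rw [le_div_iff₀ (by positivity), ← mul_pow, mul_comm]
    exact pow_le_pow_left₀ (by positivity) hDy 2
  refine le_of_pow_le_pow_left₀ two_ne_zero (by positivity) ?_
  calc ‖S (D y)‖ ^ 2 ≤ β * ‖D y‖ ^ 2 + ⟪C (D y), D y⟫ := sq_norm_apply_le S C (D y)
    _ ≤ β * (‖y‖ ^ 2 / lam ^ 2) + ‖y‖ ^ 2 / lam := by gcongr
    _ = (1 / lam + β / lam ^ 2) * ‖y‖ ^ 2 := by ring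
    _ ≤ (1 / √lam + √β / lam) ^ 2 * ‖y‖ ^ 2 := by
      gcongr; exact one_div_add_div_sq_le (norm_nonneg _) hlam
    _ = ((1 / √lam + √β / lam) * ‖y‖) ^ 2 := by ring

theorem norm_adjoint_comp_le_one (S : F →L[ℝ] 𝒢) {R : 𝒢 →L[ℝ] 𝒢} (hR : IsSelfAdjoint R)
    {lam : ℝ} (hlam : 0 ≤ lam) (h : (R ∘L (S ∘L adjoint S + lam • 1)) ∘L R = 1) :
    ‖adjoint S ∘L R‖ ≤ 1 := by
  refine opNorm_le_bound _ zero_le_one fun z => ?_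
  have hz : ‖adjoint S (R z)‖ ^ 2 + lam * ‖R z‖ ^ 2 = ‖z‖ ^ 2 := by
    have hRz : ⟪(S ∘L adjoint S + lam • 1) (R z), R z⟫ = ‖z‖ ^ 2 := by
      rw [← hR.adjoint_eq, adjoint_inner_right, ← comp_apply, ← comp_apply, hR.adjoint_eq, h,
        one_apply_eq_self, real_inner_self_eq_norm_sq]
    rw [← hRz, add_apply, comp_apply, smul_apply, one_apply_eq_self, inner_add_left,
      real_inner_smul_left, ← adjoint_inner_right, real_inner_self_eq_norm_sq,
      real_inner_self_eq_norm_sq]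
  rw [comp_apply, one_mul]
  refine le_of_pow_le_pow_left₀ two_ne_zero (norm_nonneg z) ?_
  nlinarith [sq_nonneg ‖R z‖]

end Resolvent

section Decomposition

variable {F 𝒢 H : Type*} [NormedAddCommGroup F] [NormedSpace ℝ F]
  [NormedAddCommGroup 𝒢] [NormedSpace ℝ 𝒢] [NormedAddCommGroup H] [NormedSpace ℝ H]
  (S : F →L[ℝ] 𝒢) (T : 𝒢 →L[ℝ] F) {C D : F →L[ℝ] F} {Linv : 𝒢 →L[ℝ] 𝒢} {lam : ℝ}

theorem comp_resolvent_comp_sub_comp_resolvent_eq (hD : D ∘L (C + lam • 1) = 1)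
    (hL : (S ∘L T + lam • 1) ∘L Linv = 1) :
    S ∘L D ∘L (T ∘L S - C) ∘L T ∘L Linv = S ∘L D ∘L T - 1 + lam • Linv := by
  ext g
  have hDC : ∀ x, D (C x) = x - lam • D x := fun x =>
    eq_sub_of_add_eq (by simpa using congr($hD x))
  have hSTL : S (T (Linv g)) = g - lam • Linv g :=
    eq_sub_of_add_eq (by simpa using congr($hL g))
  simp only [comp_apply, sub_apply, add_apply, smul_apply, one_apply_eq_self, hDC, hSTL, map_sub,
    map_smul]
  abel

theorem comp_resolvent_comp_sub_eq (hD : D ∘L (C + lam • 1) = 1)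
    (hL : (S ∘L T + lam • 1) ∘L Linv = 1) (B : H →L[ℝ] F) (G : H →L[ℝ] 𝒢) :
    S ∘L D ∘L B - G = (S ∘L D) ∘L (B - T ∘L G)
      + (S ∘L D ∘L (T ∘L S - C) ∘L T ∘L Linv) ∘L G - lam • (Linv ∘L G) := by
  rw [comp_resolvent_comp_sub_comp_resolvent_eq S T hD hL]
  ext x
  simp only [comp_apply, sub_apply, add_apply, smul_apply, one_apply_eq_self, map_sub]
  abel

end Decomposition

theorem stmt_3_general {F 𝒢 H : Type*}
    [NormedAddCommGroup F] [InnerProductSpace ℝ F] [CompleteSpace F]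
    [NormedAddCommGroup 𝒢] [InnerProductSpace ℝ 𝒢] [CompleteSpace 𝒢]
    [NormedAddCommGroup H] [InnerProductSpace ℝ H]
    {ι : Type*} (bH : HilbertBasis ι ℝ H)
    (S : F →L[ℝ] 𝒢) (lam : ℝ) (hlam : 0 < lam)
    (G : H →L[ℝ] 𝒢) (hG : Summable fun i => ‖G (bH i)‖ ^ 2)
    (Chat : F →L[ℝ] F) (hChat : Chat.IsPositive)
    (Bhat : H →L[ℝ] F) (hB : Summable fun i => ‖Bhat (bH i)‖ ^ 2)
    (D : F →L[ℝ] F)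
    (hD1 : (Chat + lam • 1) ∘L D = 1) (hD2 : D ∘L (Chat + lam • 1) = 1)
    (Linv : 𝒢 →L[ℝ] 𝒢)
    (hL1 : (S ∘L adjoint S + lam • 1) ∘L Linv = 1)
    (hL2 : Linv ∘L (S ∘L adjoint S + lam • 1) = 1)
    (LinvSqrt : 𝒢 →L[ℝ] 𝒢) (hLsPos : LinvSqrt.IsPositive)
    (hLsSq : LinvSqrt ∘L LinvSqrt = Linv) :
    hsNorm bH (S ∘L D ∘L Bhat - G)
      ≤ (1 / Real.sqrt lam + Real.sqrt ‖adjoint S ∘L S - Chat‖ / lam)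
          * (‖adjoint S ∘L S - Chat‖ * hsNorm bH (LinvSqrt ∘L G)
              + hsNorm bH (Bhat - adjoint S ∘L G))
        + lam * hsNorm bH (Linv ∘L G) := by
  set β₁ := ‖adjoint S ∘L S - Chat‖
  set κ := 1 / √lam + √β₁ / lam
  set K := (S ∘L D) ∘L (adjoint S ∘L S - Chat) ∘L (adjoint S ∘L LinvSqrt)
  have hSD : ‖S ∘L D‖ ≤ κ := norm_comp_resolvent_le S hChat hlam hD1
  have hSR : ‖adjoint S ∘L LinvSqrt‖ ≤ 1 := norm_adjoint_comp_le_one S hLsPos.isSelfAdjoint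
    hlam.le (mul_mul_eq_one_of_mul_self_eq_inv hL1 hL2 hLsSq)
  have hK : ‖K‖ ≤ κ * β₁ :=
    calc ‖K‖ ≤ ‖S ∘L D‖ * (β₁ * ‖adjoint S ∘L LinvSqrt‖) :=
          (opNorm_comp_le _ _).trans (by gcongr; exact opNorm_comp_le _ _)
      _ ≤ κ * (β₁ * 1) := by gcongr
      _ = κ * β₁ := by rw [mul_one]
  have hG2 := memℓp_two_iff_summable_sq.2 hG
  have hB2 := memℓp_two_iff_summable_sq.2 hB
  have h₁ : Memℓp (fun i => (Bhat - adjoint S ∘L G) (bH i)) 2 :=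
    hB2.sub (hG2.map_continuousLinearMap (adjoint S))
  have h₂ : Memℓp (fun i => (LinvSqrt ∘L G) (bH i)) 2 := hG2.map_continuousLinearMap LinvSqrt
  have h₃ : Memℓp (fun i => (Linv ∘L G) (bH i)) 2 := hG2.map_continuousLinearMap Linv
  have hdecomp : S ∘L D ∘L Bhat - G
      = (S ∘L D) ∘L (Bhat - adjoint S ∘L G) + K ∘L (LinvSqrt ∘L G) - lam • (Linv ∘L G) := by
    rw [comp_resolvent_comp_sub_eq S (adjoint S) hD2 hL1, ← hLsSq]
    simp only [K, comp_assoc]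
  calc hsNorm bH (S ∘L D ∘L Bhat - G)
      ≤ hsNorm bH ((S ∘L D) ∘L (Bhat - adjoint S ∘L G)) + hsNorm bH (K ∘L (LinvSqrt ∘L G))
          + hsNorm bH (lam • (Linv ∘L G)) := by
        rw [hdecomp]
        exact hsNorm_add_sub_le bH (h₁.map_continuousLinearMap (S ∘L D))
          (h₂.map_continuousLinearMap K) (h₃.const_smul lam)
    _ ≤ κ * hsNorm bH (Bhat - adjoint S ∘L G) + κ * β₁ * hsNorm bH (LinvSqrt ∘L G)
          + lam * hsNorm bH (Linv ∘L G) := by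
        rw [hsNorm_smul, abs_of_pos hlam]
        gcongr
        · exact (hsNorm_comp_le bH _ h₁).trans (by gcongr; exact hsNorm_nonneg bH _)
        · exact (hsNorm_comp_le bH _ h₂).trans (by gcongr; exact hsNorm_nonneg bH _)
    _ = κ * (β₁ * hsNorm bH (LinvSqrt ∘L G) + hsNorm bH (Bhat - adjoint S ∘L G))
          + lam * hsNorm bH (Linv ∘L G) := by ring

/-- **Analytic decomposition of the excess risk of the estimator.**
`F`, `𝒢`, `H` real Hilbert spaces with `H` separable (with Hilbert basis `bH`),
`S : F → 𝒢` bounded, `C = S*S`, `L = SS*`, `λ > 0`, `G : H → 𝒢` Hilbert–Schmidt,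
`B = S*G`, `Ĉ` positive self-adjoint with inverse `D` of `Ĉ + λI`, `B̂ : H → F`
Hilbert–Schmidt, `Linv = (L + λI)⁻¹` with positive square root `LinvSqrt = (L+λI)^{-1/2}`.
With `β₁ = ‖C - Ĉ‖`, `β₂ = ‖B̂ - B‖_{HS}`, `A_r(λ) = ‖(L+λI)^{-r} G‖_{HS}`:
`‖S (Ĉ+λI)⁻¹ B̂ - G‖_{HS} ≤ (1/√λ + β₁^{1/2}/λ)(β₁ A_{1/2}(λ) + β₂) + λ A_1(λ)`. -/
theorem stmt_3 {F 𝒢 H : Type*}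
    [NormedAddCommGroup F] [InnerProductSpace ℝ F] [CompleteSpace F]
    [NormedAddCommGroup 𝒢] [InnerProductSpace ℝ 𝒢] [CompleteSpace 𝒢]
    [NormedAddCommGroup H] [InnerProductSpace ℝ H] [CompleteSpace H]
    {ι : Type*} [Countable ι] (bH : HilbertBasis ι ℝ H)
    (S : F →L[ℝ] 𝒢) (lam : ℝ) (hlam : 0 < lam)
    (G : H →L[ℝ] 𝒢) (hG : Summable fun i => ‖G (bH i)‖ ^ 2)
    (Chat : F →L[ℝ] F) (hChat : Chat.IsPositive)
    (Bhat : H →L[ℝ] F) (hB : Summable fun i => ‖Bhat (bH i)‖ ^ 2)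
    (D : F →L[ℝ] F)
    (hD1 : (Chat + lam • 1) ∘L D = 1) (hD2 : D ∘L (Chat + lam • 1) = 1)
    (Linv : 𝒢 →L[ℝ] 𝒢)
    (hL1 : (S ∘L adjoint S + lam • 1) ∘L Linv = 1)
    (hL2 : Linv ∘L (S ∘L adjoint S + lam • 1) = 1)
    (LinvSqrt : 𝒢 →L[ℝ] 𝒢) (hLsPos : LinvSqrt.IsPositive)
    (hLsSq : LinvSqrt ∘L LinvSqrt = Linv) :
    hsNorm bH (S ∘L D ∘L Bhat - G)
      ≤ (1 / Real.sqrt lam + Real.sqrt ‖adjoint S ∘L S - Chat‖ / lam)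
          * (‖adjoint S ∘L S - Chat‖ * hsNorm bH (LinvSqrt ∘L G)
              + hsNorm bH (Bhat - adjoint S ∘L G))
        + lam * hsNorm bH (Linv ∘L G) :=
  stmt_3_general bH S lam hlam G hG Chat hChat Bhat hB D hD1 hD2 Linv hL1 hL2 LinvSqrt hLsPos hLsSq
end
end

section
/- Let X be a measurable space, P a finite set, ρ_X a probability measure on X, [X] a measurable part space with part-selection (x,p) ↦ x_p, and let k̄ : [X]×[X] → ℝ and k₀ : X×X → ℝ be symmetric positive semidefinite kernels bounded on the diagonal: r̄ = sup_ξ k̄(ξ,ξ) < ∞ and r₀ = sup_x k₀(x,x) < ∞. Define the sum kernel k((x,p),(x',q)) = k̄(x_p, x'_q) + k₀(x,x') δ_{p,q}. Then for all p, q ∈ P, the within-locality covariance C_{p,q} = E_{x,x'∼ρ_X i.i.d.} [ k((x,p),(x,q))² − k((x,p),(x',q))² ] satisfies C_{p,q} ≤ C̄_{p,q} + (4 r̄ + r₀) r₀ δ_{p,q}, where C̄_{p,q} = E_{x,x'∼ρ_X i.i.d.} [ k̄(x_p,x_q)² − k̄(x_p,x'_q)² ]. -/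
/-!
For `p ≠ q` both sides coincide. For `p = q`, write `a = k̄(x_p,x_p)`, `b = k̄(x_p,x'_p)`,
`d = k₀(x,x)` and `e = k₀(x,x')`; then pointwise
`(a + d)² - (b + e)² - (a² - b²) = 2ad + d² - 2be - e² ≤ 2r̄r₀ + r₀² + 2r̄r₀`,
because positive semidefiniteness bounds every kernel value by the supremum of the diagonal.
Integrating this bound against the probability measure `ρ_X ⊗ ρ_X` gives the claim.
-/

noncomputable section

open MeasureTheory

/-- A symmetric positive semidefinite real kernel on a set `A`. -/
def IsPSDKernel {A : Type*} (K : A → A → ℝ) : Prop :=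
  (∀ a b, K a b = K b a) ∧
    ∀ (n : ℕ) (a : Fin n → A) (c : Fin n → ℝ),
      0 ≤ ∑ i, ∑ j, c i * c j * K (a i) (a j)

open Function

namespace IsPSDKernel

variable {A : Type*} {K : A → A → ℝ}

theorem diag_nonneg (hK : IsPSDKernel K) (a : A) : 0 ≤ K a a := by
  simpa using hK.2 1 (fun _ => a) (fun _ => 1)

theorem abs_le_half_add_diag (hK : IsPSDKernel K) (a b : A) :
    |K a b| ≤ (K a a + K b b) / 2 := by
  have hplus := hK.2 2 ![a, b] ![1, 1]
  have hminus := hK.2 2 ![a, b] ![1, -1]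
  simp only [Fin.sum_univ_two, Matrix.cons_val_zero, Matrix.cons_val_one] at hplus hminus
  rw [hK.1 b a] at hplus hminus
  rw [abs_le]
  constructor <;> linarith

theorem abs_le_iSup_diag (hK : IsPSDKernel K) (hbdd : BddAbove (Set.range fun c => K c c))
    (a b : A) : |K a b| ≤ ⨆ c, K c c := by
  have ha : K a a ≤ ⨆ c, K c c := le_ciSup hbdd a
  have hb : K b b ≤ ⨆ c, K c c := le_ciSup hbdd b
  linarith [hK.abs_le_half_add_diag a b]

end IsPSDKernel

theorem add_sq_sub_add_sq_le {a b d e r s : ℝ} (ha : a ≤ r) (hb : |b| ≤ r)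
    (hd₀ : 0 ≤ d) (hd : d ≤ s) (he : |e| ≤ s) :
    (a + d) ^ 2 - (b + e) ^ 2 ≤ a ^ 2 - b ^ 2 + (4 * r + s) * s := by
  have hr : 0 ≤ r := (abs_nonneg b).trans hb
  have hbe : -(b * e) ≤ r * s :=
    calc -(b * e) ≤ |b| * |e| := by rw [← abs_mul]; exact neg_le_abs _
      _ ≤ r * s := mul_le_mul hb he (abs_nonneg e) hr
  nlinarith [mul_le_mul ha hd hd₀ hr, mul_le_mul hd hd hd₀ (hd₀.trans hd), sq_nonneg e]

section Integral

variable {α β : Type*} [MeasurableSpace α] [MeasurableSpace β]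

theorem integrable_sq_of_abs_le {μ : Measure α} [IsFiniteMeasure μ] {f : α → ℝ}
    (hf : AEStronglyMeasurable f μ) {C : ℝ} (hC : ∀ x, |f x| ≤ C) :
    Integrable (fun x => f x ^ 2) μ :=
  ((memLp_top_of_bound hf C (ae_of_all _ hC)).mono_exponent le_top).integrable_sq

theorem integral_integral_le_integral_integral_add {μ : Measure α} {ν : Measure β}
    [IsProbabilityMeasure μ] [IsProbabilityMeasure ν] {f g : α → β → ℝ}
    (hf : Integrable (uncurry f) (μ.prod ν)) (hg : Integrable (uncurry g) (μ.prod ν))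
    {c : ℝ} (hfg : ∀ x y, f x y ≤ g x y + c) :
    ∫ x, ∫ y, f x y ∂ν ∂μ ≤ ∫ x, ∫ y, g x y ∂ν ∂μ + c := by
  rw [integral_integral hf, integral_integral hg]
  calc ∫ z, f z.1 z.2 ∂μ.prod ν ≤ ∫ z, (g z.1 z.2 + c) ∂μ.prod ν :=
        integral_mono hf (hg.add (integrable_const c)) fun z => hfg z.1 z.2
    _ = ∫ z, g z.1 z.2 ∂μ.prod ν + c := by
        have hg' : Integrable (fun z : α × β => g z.1 z.2) (μ.prod ν) := hg
        rw [integral_add hg' (integrable_const c), integral_const, probReal_univ, one_smul]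

end Integral

theorem stmt_17_general {X P W : Type*} [MeasurableSpace X] [DecidableEq P]
    (ρX : Measure X) [IsProbabilityMeasure ρX]
    (part : X → P → W)
    (kbar : W → W → ℝ) (k0 : X → X → ℝ)
    (hkbarPSD : IsPSDKernel kbar) (hk0PSD : IsPSDKernel k0)
    (rbar r0 : ℝ)
    (hrbarBdd : BddAbove (Set.range fun w => kbar w w))
    (hrbar : rbar = ⨆ w, kbar w w)
    (hr0Bdd : BddAbove (Set.range fun x => k0 x x))
    (hr0 : r0 = ⨆ x, k0 x x)
    (hkbarMeas : ∀ p q, Measurable fun xx' : X × X => kbar (part xx'.1 p) (part xx'.2 q))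
    (hk0Meas : Measurable fun xx' : X × X => k0 xx'.1 xx'.2)
    (Cov Covbar : P → P → ℝ)
    (hCov : ∀ p q, Cov p q = ∫ x, ∫ x',
        ((kbar (part x p) (part x q) + k0 x x * (if p = q then (1 : ℝ) else 0)) ^ 2
          - (kbar (part x p) (part x' q) + k0 x x' * (if p = q then (1 : ℝ) else 0)) ^ 2)
        ∂ρX ∂ρX)
    (hCovbar : ∀ p q, Covbar p q = ∫ x, ∫ x',
        (kbar (part x p) (part x q) ^ 2 - kbar (part x p) (part x' q) ^ 2) ∂ρX ∂ρX) :
    ∀ p q : P, Cov p q ≤ Covbar p q + (4 * rbar + r0) * r0 * (if p = q then (1 : ℝ) else 0) := by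
  intro p q
  rw [hCov, hCovbar]
  by_cases hpq : p = q
  swap
  · simp [hpq]
  subst hpq
  simp only [if_true, mul_one]
  have hkbar : ∀ a b, |kbar a b| ≤ rbar := hrbar ▸ hkbarPSD.abs_le_iSup_diag hrbarBdd
  have hk0 : ∀ a b, |k0 a b| ≤ r0 := hr0 ▸ hk0PSD.abs_le_iSup_diag hr0Bdd
  have hk0_diag : ∀ x, k0 x x ≤ r0 := fun x => hr0 ▸ le_ciSup hr0Bdd x
  have hkbar_diag : ∀ w, kbar w w ≤ rbar := fun w => hrbar ▸ le_ciSup hrbarBdd w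
  have hdiag : Measurable fun z : X × X => (z.1, z.1) := measurable_fst.prodMk measurable_fst
  have hkbar_diag_meas := (hkbarMeas p p).comp hdiag
  have hk0_diag_meas := hk0Meas.comp hdiag
  have hsum_bound : ∀ a b c d, |kbar a b + k0 c d| ≤ rbar + r0 := fun a b c d =>
    (abs_add_le _ _).trans (add_le_add (hkbar a b) (hk0 c d))
  refine integral_integral_le_integral_integral_add ?_ ?_ fun x x' =>
    add_sq_sub_add_sq_le (hkbar_diag _) (hkbar _ _) (hk0PSD.diag_nonneg x) (hk0_diag x) (hk0 x x')
  · exact (integrable_sq_of_abs_le (hkbar_diag_meas.add hk0_diag_meas).aestronglyMeasurable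
      fun _ => hsum_bound _ _ _ _).sub
      (integrable_sq_of_abs_le ((hkbarMeas p p).add hk0Meas).aestronglyMeasurable
      fun _ => hsum_bound _ _ _ _)
  · exact (integrable_sq_of_abs_le hkbar_diag_meas.aestronglyMeasurable fun _ => hkbar _ _).sub
      (integrable_sq_of_abs_le (hkbarMeas p p).aestronglyMeasurable fun _ => hkbar _ _)

/-- **Within-locality of the sum (universal + restriction) kernel.**
For `k((x,p),(x',q)) = k̄(x_p,x'_q) + k₀(x,x') δ_{p,q}`, with `k̄`, `k₀` symmetric
PSD kernels bounded on the diagonal by `r̄ = sup k̄(ξ,ξ)` and `r₀ = sup k₀(x,x)`: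
`C_{p,q} ≤ C̄_{p,q} + (4r̄ + r₀) r₀ δ_{p,q}`, where
`C_{p,q} = E_{x,x'}[k((x,p),(x,q))² - k((x,p),(x',q))²]` and
`C̄_{p,q} = E_{x,x'}[k̄(x_p,x_q)² - k̄(x_p,x'_q)²]`. -/
theorem stmt_17 {X P W : Type*} [MeasurableSpace X] [Fintype P] [DecidableEq P]
    (ρX : Measure X) [IsProbabilityMeasure ρX]
    (part : X → P → W)
    (kbar : W → W → ℝ) (k0 : X → X → ℝ)
    (hkbarPSD : IsPSDKernel kbar) (hk0PSD : IsPSDKernel k0)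
    (rbar r0 : ℝ)
    (hrbarBdd : BddAbove (Set.range fun w => kbar w w))
    (hrbar : rbar = ⨆ w, kbar w w)
    (hr0Bdd : BddAbove (Set.range fun x => k0 x x))
    (hr0 : r0 = ⨆ x, k0 x x)
    (hkbarMeas : ∀ p q, Measurable fun xx' : X × X => kbar (part xx'.1 p) (part xx'.2 q))
    (hk0Meas : Measurable fun xx' : X × X => k0 xx'.1 xx'.2)
    (Cov Covbar : P → P → ℝ)
    (hCov : ∀ p q, Cov p q = ∫ x, ∫ x',
        ((kbar (part x p) (part x q) + k0 x x * (if p = q then (1 : ℝ) else 0)) ^ 2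
          - (kbar (part x p) (part x' q) + k0 x x' * (if p = q then (1 : ℝ) else 0)) ^ 2)
        ∂ρX ∂ρX)
    (hCovbar : ∀ p q, Covbar p q = ∫ x, ∫ x',
        (kbar (part x p) (part x q) ^ 2 - kbar (part x p) (part x' q) ^ 2) ∂ρX ∂ρX) :
    ∀ p q : P, Cov p q ≤ Covbar p q + (4 * rbar + r0) * r0 * (if p = q then (1 : ℝ) else 0) :=
  stmt_17_general ρX part kbar k0 hkbarPSD hk0PSD rbar r0 hrbarBdd hrbar hr0Bdd hr0 hkbarMeas
    hk0Meas Cov Covbar hCov hCovbar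
end
end
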